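/- Let θ = 2.13 and let r be real with 4.999 ≤ r ≤ 5. If γ is the unique root in (0, 0.56) of q(x) = 1 − (r − θ)x + (r − 2θ)x² + θx³, then 1/(1 − γ) − θ > 0.04. -/

import Mathlib

/-!
For `0 ≤ x ≤ 1` the cubic `q` is antitone in `r`, since `∂q/∂r = -x(1 - x)`. Hence for `r ≤ 5`
it dominates `q 5 2.13`, which is decreasing on `[0, 0.5392]` and still positive at `0.5392`.
So the root satisfies `γ > 0.5392`, and `1/(1 - γ) > 1/0.4608 > 2.17`.
-/

/-- The cubic `q(x) = 1 - (r - θ)x + (r - 2θ)x² + θx³`. -/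
def q (r θ x : ℝ) : ℝ :=
  1 - (r - θ) * x + (r - 2 * θ) * x ^ 2 + θ * x ^ 3

theorem q_eq_q_add (r r' θ x : ℝ) : q r θ x = q r' θ x + (r' - r) * (x * (1 - x)) := by
  unfold q
  ring

theorem q_antitone_left {r r' θ x : ℝ} (hr : r ≤ r') (hx₀ : 0 ≤ x) (hx₁ : x ≤ 1) :
    q r' θ x ≤ q r θ x := by
  rw [q_eq_q_add r r' θ x]
  have : 0 ≤ (r' - r) * (x * (1 - x)) :=
    mul_nonneg (sub_nonneg.2 hr) (mul_nonneg hx₀ (sub_nonneg.2 hx₁))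
  linarith

theorem q_five_pos_of_le {x : ℝ} (hx₀ : 0 ≤ x) (hx : x ≤ 0.5392) : 0 < q 5 2.13 x := by
  have hvalue : 0 < q 5 2.13 0.5392 := by norm_num [q]
  have hdecr : q 5 2.13 0.5392 ≤ q 5 2.13 x := by
    unfold q
    nlinarith [mul_nonneg hx₀ (sub_nonneg.2 hx), mul_nonneg (mul_nonneg hx₀ hx₀) (sub_nonneg.2 hx)]
  linarith

theorem lt_of_q_eq_zero {r γ : ℝ} (hr : r ≤ 5) (hγ₀ : 0 ≤ γ) (hq : q r 2.13 γ = 0) :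
    0.5392 < γ := by
  by_contra! hγ
  have := q_antitone_left (θ := 2.13) hr hγ₀ (by linarith)
  linarith [q_five_pos_of_le hγ₀ hγ]

theorem gap_at_213_general (θ r γ : ℝ) (hθ : θ = 2.13) (hr2 : r ≤ 5)
    (hγ : 0 < γ ∧ γ < 0.56 ∧ q r θ γ = 0) :
    0.04 < 1 / (1 - γ) - θ := by
  obtain ⟨hγ₀, hγ₁, hq⟩ := hγ
  subst hθ
  have hγ_big : 0.5392 < γ := lt_of_q_eq_zero hr2 hγ₀.le hq
  have hgap : 2.17 < 1 / (1 - γ) := by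
    rw [lt_div_iff₀ (by linarith)]
    linarith
  linarith

/-- Let `θ = 2.13` and `4.999 ≤ r ≤ 5`. If `γ` is the root of `q` in
`(0, 0.56)`, then `1/(1 - γ) - θ > 0.04`. -/
theorem gap_at_213 (θ r γ : ℝ) (hθ : θ = 2.13) (hr1 : 4.999 ≤ r) (hr2 : r ≤ 5)
    (hγ : 0 < γ ∧ γ < 0.56 ∧ q r θ γ = 0) :
    0.04 < 1 / (1 - γ) - θ :=
  gap_at_213_general θ r γ hθ hr2 hγ
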